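/- Under the setup, Assumptions 2–5, and the symmetric case hypothesis, fix an integer K with 1 ≤ K ≤ N and let W_K := {w ∈ ℝ^N : w_n = 0 in exactly K entries and w_n = 1 otherwise} (so all w ∈ W_K satisfy N^{−1/2}‖w‖₂ ≤ 1 ≤ C_w). Define C_∞ := sup_{θ∈Ω_θ} max_{1≤n≤N} max{‖g_n(θ)‖₁, ‖h_n(θ)‖₁} and δ_K := K·C_∞/N. If δ_K ≤ Δ_δ, then for every w ∈ W_K and every θ̂(w) ∈ Ω_θ with G(θ̂(w), w) = 0, ‖θ̂_IJ(w) − θ̂(w)‖₂ ≤ 2·C_op²·C_IJ·(K·C_∞/N)² ≤ 2·C_op²·C_IJ·K²·D²·max{C_g, C_h}²/N. -/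

import Mathlib

/- Swiss Army Infinitesimal Jackknife: consistency for leave-K-out
   cross-validation (Corollary 1). -/

open scoped BigOperators

noncomputable def vnorm2 {ι : Type*} [Fintype ι] (v : ι → ℝ) : ℝ :=
  Real.sqrt (∑ i, (v i) ^ 2)

noncomputable def vnorm1 {ι : Type*} [Fintype ι] (v : ι → ℝ) : ℝ :=
  ∑ i, |v i|

noncomputable def mnorm1 {D : ℕ} (M : Matrix (Fin D) (Fin D) ℝ) : ℝ :=
  ∑ i, ∑ j, |M i j|

noncomputable def opNorm {D : ℕ} (M : Matrix (Fin D) (Fin D) ℝ) : ℝ :=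
  ‖Matrix.toEuclideanCLM (𝕜 := ℝ) M‖

/-- `G(θ, w) = (1/N) ∑ₙ wₙ gₙ(θ)`. -/
noncomputable def Gfun {N D : ℕ} (g : Fin N → (Fin D → ℝ) → Fin D → ℝ)
    (θ : Fin D → ℝ) (w : Fin N → ℝ) : Fin D → ℝ :=
  (N : ℝ)⁻¹ • ∑ n, w n • g n θ

/-- `H(θ, w) = (1/N) ∑ₙ wₙ hₙ(θ)`. -/
noncomputable def Hfun {N D : ℕ} (hm : Fin N → (Fin D → ℝ) → Matrix (Fin D) (Fin D) ℝ)
    (θ : Fin D → ℝ) (w : Fin N → ℝ) : Matrix (Fin D) (Fin D) ℝ :=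
  (N : ℝ)⁻¹ • ∑ n, w n • hm n θ

/-- The infinitesimal jackknife `θ̂_IJ(w) = θ̂₁ − H₁⁻¹ G(θ̂₁, w − 1_w)`. -/
noncomputable def thetaIJ {N D : ℕ} (g : Fin N → (Fin D → ℝ) → Fin D → ℝ)
    (hm : Fin N → (Fin D → ℝ) → Matrix (Fin D) (Fin D) ℝ)
    (θ1 : Fin D → ℝ) (w : Fin N → ℝ) : Fin D → ℝ :=
  θ1 - (Hfun hm θ1 1)⁻¹.mulVec (Gfun g θ1 (w - 1))

/-- The leave-`K`-out weight vectors: `wₙ = 0` in exactly `K` entries and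
`wₙ = 1` otherwise. -/
def leaveKOut (N K : ℕ) : Set (Fin N → ℝ) :=
  {w | ∃ S : Finset (Fin N), S.card = K ∧ w = fun n => if n ∈ S then 0 else 1}

/-!
Write `δ = K C_∞ / N`. Dropping `K` observations moves `G(θ, ·)` by at most `δ`, and `H(θ, ·)` by
at most `δ` in operator norm. Positive definiteness of `H(θ, 1)` with `‖H(θ, 1)⁻¹‖ ≤ C_op` makes
`G(·, 1)` strongly monotone, so `G(θ̂(w), 1) = G(θ̂(w), 1) - G(θ̂(w), w)` forces
`‖θ̂(w) - θ̂₁‖ ≤ C_op δ`. Then `θ̂_IJ(w) - θ̂(w) = H₁⁻¹ (G(θ̂(w), w) - G(θ̂₁, w) - H₁ (θ̂(w) - θ̂₁))`,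
and the mean value theorem on the segment `[θ̂₁, θ̂(w)]`, along which
`‖H(θ, w) - H₁‖ ≤ δ + L_h C_op δ`, bounds this by `C_op² (1 + L_h C_op) δ²`. Both mean value
arguments apply `domain_mvt` to the scalar functions `θ ↦ u ⬝ᵥ F θ`.
-/

open scoped Matrix Matrix.Norms.L2Operator

section vnorm2

variable {ι κ : Type*} [Fintype ι] [Fintype κ]

lemma vnorm2_eq_norm (v : ι → ℝ) : vnorm2 v = ‖WithLp.toLp 2 v‖ := by
  simp [vnorm2, EuclideanSpace.norm_eq]

lemma vnorm2_nonneg (v : ι → ℝ) : 0 ≤ vnorm2 v := Real.sqrt_nonneg _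

lemma vnorm2_eq_zero {v : ι → ℝ} : vnorm2 v = 0 ↔ v = 0 := by
  rw [vnorm2_eq_norm, norm_eq_zero]
  simp

@[simp]
lemma vnorm2_zero : vnorm2 (0 : ι → ℝ) = 0 := vnorm2_eq_zero.2 rfl

lemma vnorm2_sq (v : ι → ℝ) : vnorm2 v ^ 2 = v ⬝ᵥ v := by
  rw [vnorm2, Real.sq_sqrt (Finset.sum_nonneg fun _ _ => sq_nonneg _)]
  simp [dotProduct, sq]

lemma dotProduct_le_vnorm2_mul (u v : ι → ℝ) : u ⬝ᵥ v ≤ vnorm2 u * vnorm2 v :=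
  Real.sum_mul_le_sqrt_mul_sqrt _ _ _

lemma vnorm2_le_vnorm1 (v : ι → ℝ) : vnorm2 v ≤ vnorm1 v := by
  rw [vnorm2, vnorm1, Real.sqrt_le_left (Finset.sum_nonneg fun _ _ => abs_nonneg _)]
  simpa [vnorm1, sq_abs] using
    Finset.sum_sq_le_sq_sum_of_nonneg (s := Finset.univ) (fun i _ => abs_nonneg (v i))

lemma vnorm1_le_sqrt_card_mul_vnorm2 (v : ι → ℝ) :
    vnorm1 v ≤ Real.sqrt (Fintype.card ι) * vnorm2 v := by
  simpa [vnorm1, vnorm2, sq_abs] using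
    Real.sum_mul_le_sqrt_mul_sqrt Finset.univ (fun _ => (1 : ℝ)) (fun i => |v i|)

lemma vnorm2_slice_le (v : ι × κ → ℝ) (i : ι) : vnorm2 (fun k => v (i, k)) ≤ vnorm2 v := by
  refine Real.sqrt_le_sqrt ?_
  rw [Fintype.sum_prod_type]
  exact Finset.single_le_sum (f := fun i => ∑ k, v (i, k) ^ 2)
    (fun _ _ => Finset.sum_nonneg fun _ _ => sq_nonneg _) (Finset.mem_univ i)

lemma sum_vnorm2_slice_le (v : ι × κ → ℝ) :
    ∑ i, vnorm2 (fun k => v (i, k)) ≤ Real.sqrt (Fintype.card ι) * vnorm2 v := by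
  have h := Real.sum_mul_le_sqrt_mul_sqrt Finset.univ (fun _ => (1 : ℝ))
    (fun i => vnorm2 (fun k => v (i, k)))
  simp only [one_mul, one_pow, Finset.sum_const, Finset.card_univ, nsmul_eq_mul, mul_one] at h
  convert h using 3
  rw [vnorm2, Fintype.sum_prod_type]
  congr 1
  exact Finset.sum_congr rfl fun i _ => (Real.sq_sqrt (Finset.sum_nonneg fun _ _ => sq_nonneg _)).symm

lemma vnorm2_sub_le_of_mem_segment {a b θ : ι → ℝ} (hθ : θ ∈ segment ℝ a b) :
    vnorm2 (θ - a) ≤ vnorm2 (b - a) := by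
  rw [segment_eq_image'] at hθ
  obtain ⟨t, ⟨ht0, ht1⟩, rfl⟩ := hθ
  simp only [vnorm2_eq_norm, add_sub_cancel_left, WithLp.toLp_smul, norm_smul,
    Real.norm_of_nonneg ht0]
  exact mul_le_of_le_one_left (norm_nonneg _) ht1

end vnorm2

lemma le_of_sq_le_mul {x c : ℝ} (hc : 0 ≤ c) (h : x ^ 2 ≤ c * x) : x ≤ c := by
  nlinarith

section matrix

variable {m n : Type*} [Fintype m] [Fintype n]

lemma vnorm2_mulVec_le_vnorm2_mul (M : Matrix m n ℝ) (x : n → ℝ) :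
    vnorm2 (M *ᵥ x) ≤ vnorm2 (fun p : m × n => M p.1 p.2) * vnorm2 x := by
  rw [vnorm2, vnorm2, vnorm2, ← Real.sqrt_mul (Finset.sum_nonneg fun _ _ => sq_nonneg _)]
  refine Real.sqrt_le_sqrt ?_
  rw [Fintype.sum_prod_type, Finset.sum_mul]
  exact Finset.sum_le_sum fun i _ => Finset.sum_mul_sq_le_sq_mul_sq _ _ _

lemma dotProduct_mulVec_sq_le {M : Matrix n n ℝ} (hM : M.PosSemidef) (x y : n → ℝ) :
    (x ⬝ᵥ M *ᵥ y) ^ 2 ≤ (x ⬝ᵥ M *ᵥ x) * (y ⬝ᵥ M *ᵥ y) := by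
  let _ := M.toSeminormedAddCommGroup hM
  let _ := M.toInnerProductSpace hM
  have inner_eq (u v : n → ℝ) : (inner ℝ u v : ℝ) = u ⬝ᵥ M *ᵥ v := by
    change (M *ᵥ v) ⬝ᵥ star u = _
    simp [dotProduct_comm]
  simpa only [inner_eq, sq] using real_inner_mul_inner_self_le x y

variable [DecidableEq n]

lemma vnorm2_mulVec_le (M : Matrix m n ℝ) (x : n → ℝ) : vnorm2 (M *ᵥ x) ≤ ‖M‖ * vnorm2 x := by
  simpa [vnorm2_eq_norm] using M.l2_opNorm_mulVec (WithLp.toLp 2 x)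

lemma norm_le_vnorm2 (M : Matrix m n ℝ) : ‖M‖ ≤ vnorm2 (fun p : m × n => M p.1 p.2) := by
  refine ContinuousLinearMap.opNorm_le_bound _ (vnorm2_nonneg _) fun x => ?_
  simpa [Matrix.toLpLin_apply, vnorm2_eq_norm] using vnorm2_mulVec_le_vnorm2_mul M x.ofLp

lemma opNorm_eq_norm {D : ℕ} (M : Matrix (Fin D) (Fin D) ℝ) : opNorm M = ‖M‖ := rfl

lemma norm_le_mnorm1 {D : ℕ} (M : Matrix (Fin D) (Fin D) ℝ) : ‖M‖ ≤ mnorm1 M :=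
  (norm_le_vnorm2 M).trans <| (vnorm2_le_vnorm1 _).trans_eq <| by
    simp [vnorm1, mnorm1, Fintype.sum_prod_type]

lemma pos_of_norm_inv_le [Nonempty n] {M : Matrix n n ℝ} (hM : IsUnit M) {C : ℝ}
    (hC : ‖M⁻¹‖ ≤ C) : 0 < C :=
  (norm_pos_iff.2 (Matrix.isUnit_nonsing_inv_iff.2 hM).ne_zero).trans_le hC

/- With `x = M y`: `‖x‖⁴ = (xᵀ M y)² ≤ (xᵀ M x) (yᵀ x)` and `yᵀ x ≤ ‖M⁻¹‖ ‖x‖²`. -/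
lemma vnorm2_sq_le_mul_dotProduct_mulVec {M : Matrix n n ℝ} (hM : M.PosDef) {C : ℝ}
    (hC : ‖M⁻¹‖ ≤ C) (x : n → ℝ) : vnorm2 x ^ 2 ≤ C * (x ⬝ᵥ M *ᵥ x) := by
  set y := M⁻¹ *ᵥ x
  have hMy : M *ᵥ y = x := by
    rw [Matrix.mulVec_mulVec, Matrix.mul_nonsing_inv _ ((M.isUnit_iff_isUnit_det).1 hM.isUnit),
      Matrix.one_mulVec]
  have hyx : y ⬝ᵥ x ≤ C * vnorm2 x ^ 2 := calc
    y ⬝ᵥ x ≤ vnorm2 y * vnorm2 x := dotProduct_le_vnorm2_mul y x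
    _ ≤ (C * vnorm2 x) * vnorm2 x := by
      gcongr
      · exact vnorm2_nonneg x
      · exact (vnorm2_mulVec_le _ _).trans (by gcongr; exact vnorm2_nonneg x)
    _ = C * vnorm2 x ^ 2 := by ring
  have hCS := dotProduct_mulVec_sq_le hM.posSemidef x y
  rw [hMy, ← vnorm2_sq] at hCS
  have hxMx : 0 ≤ x ⬝ᵥ M *ᵥ x := by simpa using hM.posSemidef.re_dotProduct_nonneg (𝕜 := ℝ) x
  refine le_of_sq_le_mul (mul_nonneg ((norm_nonneg _).trans hC) hxMx) ?_
  nlinarith [sq_nonneg (vnorm2 x)]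

end matrix

section meanValue

variable {n : Type*} [Fintype n] {Ω : Set (n → ℝ)} {F : (n → ℝ) → n → ℝ}

lemma exists_mem_segment_dotProduct_sub_eq (hΩ : Convex ℝ Ω)
    {F' : (n → ℝ) → (n → ℝ) →L[ℝ] n → ℝ} (hF : ∀ θ ∈ Ω, HasFDerivWithinAt F (F' θ) Ω θ)
    {a b : n → ℝ} (ha : a ∈ Ω) (hb : b ∈ Ω) (u : n → ℝ) :
    ∃ z ∈ segment ℝ a b, u ⬝ᵥ (F b - F a) = u ⬝ᵥ F' z (b - a) := by
  let ℓ : (n → ℝ) →L[ℝ] ℝ := (dotProductBilin ℝ ℝ u).toContinuousLinearMap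
  obtain ⟨z, hz, h⟩ := domain_mvt (f := fun θ => u ⬝ᵥ F θ)
    (fun θ hθ => ℓ.hasFDerivAt.comp_hasFDerivWithinAt θ (hF θ hθ)) hΩ ha hb
  exact ⟨z, hz, by simpa [ℓ, dotProduct_sub] using h⟩

variable {A : (n → ℝ) → Matrix n n ℝ}
  (hF : ∀ θ ∈ Ω, HasFDerivWithinAt F (A θ).mulVecLin.toContinuousLinearMap Ω θ)
include hF

lemma vnorm2_sub_sub_mulVec_le (hΩ : Convex ℝ Ω) {a b : n → ℝ} (ha : a ∈ Ω) (hb : b ∈ Ω)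
    [DecidableEq n] {B : Matrix n n ℝ} {M : ℝ} (hM : ∀ θ ∈ segment ℝ a b, ‖A θ - B‖ ≤ M) :
    vnorm2 (F b - F a - B *ᵥ (b - a)) ≤ M * vnorm2 (b - a) := by
  set v := F b - F a - B *ᵥ (b - a)
  obtain ⟨z, hz, h⟩ := exists_mem_segment_dotProduct_sub_eq hΩ hF ha hb v
  have hv : vnorm2 v ^ 2 = v ⬝ᵥ (A z - B) *ᵥ (b - a) := by
    simp [v, vnorm2_sq, Matrix.sub_mulVec, dotProduct_sub, h]
  have hM0 := (norm_nonneg _).trans (hM z hz)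
  refine le_of_sq_le_mul (mul_nonneg hM0 (vnorm2_nonneg _)) ?_
  calc vnorm2 v ^ 2 = v ⬝ᵥ (A z - B) *ᵥ (b - a) := hv
    _ ≤ vnorm2 v * vnorm2 ((A z - B) *ᵥ (b - a)) := dotProduct_le_vnorm2_mul _ _
    _ ≤ vnorm2 v * (M * vnorm2 (b - a)) := by
      gcongr
      · exact vnorm2_nonneg v
      · exact (vnorm2_mulVec_le _ _).trans (by gcongr; exacts [vnorm2_nonneg _, hM z hz])
    _ = M * vnorm2 (b - a) * vnorm2 v := by ring

lemma vnorm2_sub_le_mul_vnorm2_sub_of_posDef (hΩ : Convex ℝ Ω) {a b : n → ℝ} (ha : a ∈ Ω) (hb : b ∈ Ω)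
    [DecidableEq n] (hA : ∀ θ ∈ Ω, (A θ).PosDef) {C : ℝ} (hC : ∀ θ ∈ Ω, ‖(A θ)⁻¹‖ ≤ C) :
    vnorm2 (b - a) ≤ C * vnorm2 (F b - F a) := by
  obtain ⟨z, hz, h⟩ := exists_mem_segment_dotProduct_sub_eq hΩ hF ha hb (b - a)
  have hzΩ := hΩ.segment_subset ha hb hz
  have hC0 : 0 ≤ C := (norm_nonneg _).trans (hC a ha)
  refine le_of_sq_le_mul (mul_nonneg hC0 (vnorm2_nonneg _)) ?_
  calc vnorm2 (b - a) ^ 2 ≤ C * ((b - a) ⬝ᵥ A z *ᵥ (b - a)) :=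
        vnorm2_sq_le_mul_dotProduct_mulVec (hA z hzΩ) (hC z hzΩ) _
    _ = C * ((b - a) ⬝ᵥ (F b - F a)) := by simp [h]
    _ ≤ C * (vnorm2 (b - a) * vnorm2 (F b - F a)) := by gcongr; exact dotProduct_le_vnorm2_mul _ _
    _ = C * vnorm2 (F b - F a) * vnorm2 (b - a) := by ring

end meanValue

section iSup

variable {α β : Type*} {f : α → β → ℝ} {P : ℝ}

lemma le_ciSup_ciSup_of_forall_le (hP : ∀ a b, f a b ≤ P) (a : α) (b : β) :
    f a b ≤ ⨆ a, ⨆ b, f a b := by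
  have : Nonempty β := ⟨b⟩
  refine (le_ciSup ⟨P, ?_⟩ b).trans (le_ciSup (f := fun a => ⨆ b, f a b) ⟨P, ?_⟩ a)
  · rintro _ ⟨b, rfl⟩; exact hP a b
  · rintro _ ⟨a, rfl⟩; exact ciSup_le (hP a)

lemma ciSup_ciSup_le_of_forall_le [Nonempty α] [Nonempty β] (hP : ∀ a b, f a b ≤ P) :
    ⨆ a, ⨆ b, f a b ≤ P :=
  ciSup_le fun a => ciSup_le (hP a)

end iSup

lemma norm_inv_natCast_smul_sum_le {ι E : Type*} [SeminormedAddCommGroup E] [NormedSpace ℝ E]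
    (N : ℕ) (S : Finset ι) (x : ι → E) {c : ℝ} (hc : ∀ n ∈ S, ‖x n‖ ≤ c) :
    ‖(N : ℝ)⁻¹ • ∑ n ∈ S, x n‖ ≤ S.card * c / N := by
  rw [norm_smul, norm_inv, Real.norm_natCast, inv_mul_eq_div]
  gcongr
  exact (norm_sum_le _ _).trans (by simpa using Finset.sum_le_sum hc)

lemma smul_sum_one_sub_leaveOut {ι V : Type*} [Fintype ι] [DecidableEq ι] [AddCommGroup V]
    [Module ℝ V] (c : ℝ) (S : Finset ι) (x : ι → V) :
    c • ∑ n, (1 : ι → ℝ) n • x n - c • ∑ n, (if n ∈ S then (0 : ℝ) else 1) • x n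
      = c • ∑ n ∈ S, x n := by
  have h (n : ι) : (1 : ι → ℝ) n • x n - (if n ∈ S then (0 : ℝ) else 1) • x n
      = if n ∈ S then x n else 0 := by
    split_ifs <;> simp
  rw [← smul_sub, ← Finset.sum_sub_distrib]
  simp only [h, Finset.sum_ite_mem, Finset.univ_inter]

section estimatingEquation

variable {N D : ℕ} (g : Fin N → (Fin D → ℝ) → Fin D → ℝ)
  (hm : Fin N → (Fin D → ℝ) → Matrix (Fin D) (Fin D) ℝ)

lemma hasFDerivWithinAt_Gfun {Ω : Set (Fin D → ℝ)}
    (hderiv : ∀ n, ∀ θ ∈ Ω,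
      HasFDerivWithinAt (g n) ((hm n θ).mulVecLin.toContinuousLinearMap) Ω θ)
    (w : Fin N → ℝ) (θ : Fin D → ℝ) (hθ : θ ∈ Ω) :
    HasFDerivWithinAt (fun θ => Gfun g θ w)
      (Hfun hm θ w).mulVecLin.toContinuousLinearMap Ω θ := by
  refine ((HasFDerivWithinAt.fun_sum fun n _ => (hderiv n θ hθ).const_smul (w n)).const_smul
    (N : ℝ)⁻¹).congr_fderiv ?_
  ext x : 1
  simp [Hfun]

lemma Gfun_sub (θ : Fin D → ℝ) (w w' : Fin N → ℝ) :
    Gfun g θ (w - w') = Gfun g θ w - Gfun g θ w' := by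
  simp [Gfun, sub_smul, Finset.sum_sub_distrib, smul_sub]

lemma thetaIJ_sub_eq {θ1 θw : Fin D → ℝ} {w : Fin N → ℝ} (hroot : Gfun g θ1 1 = 0)
    (hGw : Gfun g θw w = 0) (hH1 : IsUnit (Hfun hm θ1 1)) :
    thetaIJ g hm θ1 w - θw = (Hfun hm θ1 1)⁻¹ *ᵥ
      (Gfun g θw w - Gfun g θ1 w - Hfun hm θ1 1 *ᵥ (θw - θ1)) := by
  rw [thetaIJ, Gfun_sub, hroot, hGw, sub_zero, Matrix.mulVec_sub, Matrix.mulVec_sub,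
    Matrix.mulVec_mulVec, Matrix.nonsing_inv_mul _ ((Matrix.isUnit_iff_isUnit_det _).1 hH1),
    Matrix.one_mulVec, Matrix.mulVec_zero]
  abel

lemma thetaIJ_eq_self {θ1 : Fin D → ℝ} {w : Fin N → ℝ} (hroot : Gfun g θ1 1 = 0)
    (hG : Gfun g θ1 w = 0) : thetaIJ g hm θ1 w = θ1 := by
  simp [thetaIJ, Gfun_sub, hroot, hG]

lemma vnorm2_root_sub_root_le {Ω : Set (Fin D → ℝ)} (hΩ : Convex ℝ Ω)
    (hderiv : ∀ n, ∀ θ ∈ Ω,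
      HasFDerivWithinAt (g n) ((hm n θ).mulVecLin.toContinuousLinearMap) Ω θ)
    (hpos : ∀ θ ∈ Ω, (Hfun hm θ 1).PosDef) {Cop : ℝ} (hCop : ∀ θ ∈ Ω, ‖(Hfun hm θ 1)⁻¹‖ ≤ Cop)
    {θ1 θw : Fin D → ℝ} {w : Fin N → ℝ} (hθ1 : θ1 ∈ Ω) (hθw : θw ∈ Ω)
    (hroot : Gfun g θ1 1 = 0) (hGw : Gfun g θw w = 0) :
    vnorm2 (θw - θ1) ≤ Cop * vnorm2 (Gfun g θw 1 - Gfun g θw w) := by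
  simpa [hroot, hGw] using vnorm2_sub_le_mul_vnorm2_sub_of_posDef
    (hasFDerivWithinAt_Gfun g hm hderiv 1) hΩ hθ1 hθw hpos hCop

lemma Gfun_Hfun_one_sub_leaveOut_le (θ : Fin D → ℝ) (S : Finset (Fin N)) {c : ℝ}
    (hc : ∀ n, max (vnorm1 (g n θ)) (mnorm1 (hm n θ)) ≤ c) :
    vnorm2 (Gfun g θ 1 - Gfun g θ (fun n => if n ∈ S then 0 else 1)) ≤ S.card * c / N ∧
      ‖Hfun hm θ 1 - Hfun hm θ (fun n => if n ∈ S then 0 else 1)‖ ≤ S.card * c / N := by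
  constructor
  · rw [Gfun, Gfun, smul_sum_one_sub_leaveOut, vnorm2_eq_norm, WithLp.toLp_smul, WithLp.toLp_sum]
    refine norm_inv_natCast_smul_sum_le N S _ fun n _ => ?_
    rw [← vnorm2_eq_norm]
    exact (vnorm2_le_vnorm1 _).trans ((le_max_left _ _).trans (hc n))
  · rw [Hfun, Hfun, smul_sum_one_sub_leaveOut]
    exact norm_inv_natCast_smul_sum_le N S _ fun n _ =>
      (norm_le_mnorm1 _).trans ((le_max_right _ _).trans (hc n))

lemma norm_Hfun_one_sub_le (θ θ' : Fin D → ℝ) :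
    ‖Hfun hm θ 1 - Hfun hm θ' 1‖ ≤ vnorm2 (fun p : Fin N × Fin D × Fin D =>
      hm p.1 θ p.2.1 p.2.2 - hm p.1 θ' p.2.1 p.2.2) / Real.sqrt N := by
  set v := fun p : Fin N × Fin D × Fin D => hm p.1 θ p.2.1 p.2.2 - hm p.1 θ' p.2.1 p.2.2
  have hdiff : Hfun hm θ 1 - Hfun hm θ' 1 = (N : ℝ)⁻¹ • ∑ n, (hm n θ - hm n θ') := by
    simp [Hfun, smul_sub, Finset.sum_sub_distrib]
  rw [hdiff, norm_smul, norm_inv, Real.norm_natCast]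
  calc (N : ℝ)⁻¹ * ‖∑ n, (hm n θ - hm n θ')‖
      ≤ (N : ℝ)⁻¹ * ∑ n, vnorm2 (fun k => v (n, k)) := by
        gcongr
        exact (norm_sum_le _ _).trans (Finset.sum_le_sum fun n _ => norm_le_vnorm2 _)
    _ ≤ (N : ℝ)⁻¹ * (Real.sqrt N * vnorm2 v) := by
        gcongr
        simpa using sum_vnorm2_slice_le v
    _ = vnorm2 v / Real.sqrt N := by
        rw [← mul_assoc, inv_mul_eq_div, Real.sqrt_div_self', one_div_mul_eq_div]

lemma max_vnorm1_mnorm1_le (hN : 0 < N) {θ : Fin D → ℝ} {Cg Ch : ℝ}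
    (hg : vnorm2 (fun p : Fin N × Fin D => g p.1 θ p.2) / Real.sqrt N ≤ Cg)
    (hh : vnorm2 (fun p : Fin N × Fin D × Fin D => hm p.1 θ p.2.1 p.2.2) / Real.sqrt N ≤ Ch)
    (n : Fin N) :
    max (vnorm1 (g n θ)) (mnorm1 (hm n θ)) ≤ Real.sqrt N * (D * max Cg Ch) := by
  have hsqrtN : 0 < Real.sqrt N := Real.sqrt_pos.2 (Nat.cast_pos.2 hN)
  rw [div_le_iff₀ hsqrtN] at hg hh
  have hsqrtD : Real.sqrt (D * D) = D := Real.sqrt_mul_self (Nat.cast_nonneg D)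
  refine max_le ?_ ?_
  · calc vnorm1 (g n θ) ≤ Real.sqrt D * vnorm2 (g n θ) := by
          simpa using vnorm1_le_sqrt_card_mul_vnorm2 (g n θ)
      _ ≤ D * (Cg * Real.sqrt N) :=
          mul_le_mul ((Real.sqrt_le_sqrt (by exact_mod_cast Nat.le_mul_self D)).trans_eq hsqrtD)
            ((vnorm2_slice_le (fun p : Fin N × Fin D => g p.1 θ p.2) n).trans hg)
            (vnorm2_nonneg _) (Nat.cast_nonneg D)
      _ ≤ Real.sqrt N * (D * max Cg Ch) := by
          rw [mul_comm Cg, mul_left_comm]; gcongr; exact le_max_left _ _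
  · calc mnorm1 (hm n θ) ≤ Real.sqrt (D * D) * vnorm2 (fun q : Fin D × Fin D => hm n θ q.1 q.2) := by
          simpa [mnorm1, vnorm1, Fintype.sum_prod_type] using
            vnorm1_le_sqrt_card_mul_vnorm2 (fun q : Fin D × Fin D => hm n θ q.1 q.2)
      _ ≤ D * (Ch * Real.sqrt N) := by
          rw [hsqrtD]
          gcongr
          exact (vnorm2_slice_le (fun p : Fin N × Fin D × Fin D => hm p.1 θ p.2.1 p.2.2) n).trans hh
      _ ≤ Real.sqrt N * (D * max Cg Ch) := by
          rw [mul_comm Ch, mul_left_comm]; gcongr; exact le_max_right _ _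

theorem vnorm2_thetaIJ_sub_le {Ω : Set (Fin D → ℝ)} (hΩ : Convex ℝ Ω)
    (hderiv : ∀ n, ∀ θ ∈ Ω,
      HasFDerivWithinAt (g n) ((hm n θ).mulVecLin.toContinuousLinearMap) Ω θ)
    {θ1 θw : Fin D → ℝ} {w : Fin N → ℝ} (hθ1 : θ1 ∈ Ω) (hθw : θw ∈ Ω)
    (hroot : Gfun g θ1 1 = 0) (hGw : Gfun g θw w = 0) (hH1 : IsUnit (Hfun hm θ1 1))
    {Cop δ L r : ℝ} (hCop : ‖(Hfun hm θ1 1)⁻¹‖ ≤ Cop)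
    (hH : ∀ θ ∈ Ω, ‖Hfun hm θ 1 - Hfun hm θ w‖ ≤ δ)
    (hLip : ∀ θ ∈ Ω, vnorm2 (θ - θ1) ≤ r →
      ‖Hfun hm θ 1 - Hfun hm θ1 1‖ ≤ L * vnorm2 (θ - θ1))
    (hL : 0 ≤ L) (hr : vnorm2 (θw - θ1) ≤ r) :
    vnorm2 (thetaIJ g hm θ1 w - θw) ≤ Cop * ((δ + L * r) * r) := by
  have hsegment : ∀ θ ∈ segment ℝ θ1 θw, ‖Hfun hm θ w - Hfun hm θ1 1‖ ≤ δ + L * r := by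
    intro θ hθ
    have hθΩ := hΩ.segment_subset hθ1 hθw hθ
    have hθr := (vnorm2_sub_le_of_mem_segment hθ).trans hr
    calc ‖Hfun hm θ w - Hfun hm θ1 1‖
        ≤ ‖Hfun hm θ 1 - Hfun hm θ w‖ + ‖Hfun hm θ 1 - Hfun hm θ1 1‖ := by
          rw [norm_sub_rev (Hfun hm θ 1)]; exact norm_sub_le_norm_sub_add_norm_sub _ _ _
      _ ≤ δ + L * r := add_le_add (hH θ hθΩ) ((hLip θ hθΩ hθr).trans (by gcongr))
  have hCop0 : 0 ≤ Cop := (norm_nonneg _).trans hCop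
  have hδLr : 0 ≤ δ + L * r := (norm_nonneg _).trans (hsegment θ1 (left_mem_segment ℝ θ1 θw))
  rw [thetaIJ_sub_eq g hm hroot hGw hH1]
  calc _ ≤ ‖(Hfun hm θ1 1)⁻¹‖ * vnorm2 (Gfun g θw w - Gfun g θ1 w - Hfun hm θ1 1 *ᵥ (θw - θ1)) :=
        vnorm2_mulVec_le _ _
    _ ≤ Cop * ((δ + L * r) * vnorm2 (θw - θ1)) :=
        mul_le_mul hCop (vnorm2_sub_sub_mulVec_le (hasFDerivWithinAt_Gfun g hm hderiv w) hΩ hθ1 hθw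
          hsegment) (vnorm2_nonneg _) hCop0
    _ ≤ Cop * ((δ + L * r) * r) := by gcongr

lemma max_vnorm1_mnorm1_le_iSup_and_iSup_le (hN : 0 < N) {Ω : Set (Fin D → ℝ)} (hΩ : Ω.Nonempty)
    {Cg Ch : ℝ}
    (hA3g : ∀ θ ∈ Ω, vnorm2 (fun p : Fin N × Fin D => g p.1 θ p.2) / Real.sqrt N ≤ Cg)
    (hA3h : ∀ θ ∈ Ω,
      vnorm2 (fun p : Fin N × Fin D × Fin D => hm p.1 θ p.2.1 p.2.2) / Real.sqrt N ≤ Ch) :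
    (∀ θ ∈ Ω, ∀ n, max (vnorm1 (g n θ)) (mnorm1 (hm n θ))
        ≤ ⨆ θ : Ω, ⨆ n, max (vnorm1 (g n θ.1)) (mnorm1 (hm n θ.1))) ∧
      ⨆ θ : Ω, ⨆ n, max (vnorm1 (g n θ.1)) (mnorm1 (hm n θ.1))
        ≤ Real.sqrt N * (D * max Cg Ch) := by
  have hP (θ : Ω) (n : Fin N) := max_vnorm1_mnorm1_le g hm hN (hA3g θ θ.2) (hA3h θ θ.2) n
  have : Nonempty Ω := hΩ.to_subtype
  have : Nonempty (Fin N) := ⟨⟨0, hN⟩⟩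
  exact ⟨fun θ hθ => le_ciSup_ciSup_of_forall_le hP ⟨θ, hθ⟩, ciSup_ciSup_le_of_forall_le hP⟩

end estimatingEquation

lemma sq_mul_div_le_of_le_sqrt_mul {k c x N : ℝ} (hN : 0 < N) (hc0 : 0 ≤ c)
    (hc : c ≤ Real.sqrt N * x) : (k * c / N) ^ 2 ≤ k ^ 2 * x ^ 2 / N := by
  have hc2 : c ^ 2 ≤ N * x ^ 2 := by
    simpa [mul_pow, Real.sq_sqrt hN.le] using pow_le_pow_left₀ hc0 hc 2
  rw [div_pow, mul_pow, div_le_div_iff₀ (by positivity) hN]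
  nlinarith [mul_le_mul_of_nonneg_left hc2 (mul_nonneg (sq_nonneg k) hN.le)]

theorem swiss_army_ij_leave_K_out_general
    (N D : ℕ) (hN : 0 < N) (hD : 0 < D)
    -- setup: compact convex parameter domain
    (Ωθ : Set (Fin D → ℝ)) (hΩconv : Convex ℝ Ωθ)
    -- setup: the gₙ are continuously differentiable on Ωθ with Jacobians hₙ
    (g : Fin N → (Fin D → ℝ) → Fin D → ℝ)
    (hm : Fin N → (Fin D → ℝ) → Matrix (Fin D) (Fin D) ℝ)
    (hderiv : ∀ n, ∀ θ ∈ Ωθ,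
      HasFDerivWithinAt (g n) ((hm n θ).mulVecLin.toContinuousLinearMap) Ωθ θ)
    -- setup: θ̂₁ solves the estimating equation at weights 1_w
    (θ1 : Fin D → ℝ) (hθ1 : θ1 ∈ Ωθ) (hroot : Gfun g θ1 1 = 0)
    -- Assumption 2 (non-degeneracy)
    (Cop : ℝ)
    (hA2 : ∀ θ ∈ Ωθ, IsUnit (Hfun hm θ 1) ∧ opNorm (Hfun hm θ 1)⁻¹ ≤ Cop)
    -- Assumption 3 (bounded averages)
    (Cg Ch : ℝ)
    (hA3g : ∀ θ ∈ Ωθ,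
      vnorm2 (fun p : Fin N × Fin D => g p.1 θ p.2) / Real.sqrt N ≤ Cg)
    (hA3h : ∀ θ ∈ Ωθ,
      vnorm2 (fun p : Fin N × Fin D × Fin D => hm p.1 θ p.2.1 p.2.2) / Real.sqrt N ≤ Ch)
    -- Assumption 4 (local smoothness)
    (Δθ Lh : ℝ)
    (hA4 : ∀ θ ∈ Ωθ, vnorm2 (θ - θ1) ≤ Δθ →
      vnorm2 (fun p : Fin N × Fin D × Fin D =>
          hm p.1 θ p.2.1 p.2.2 - hm p.1 θ1 p.2.1 p.2.2) / Real.sqrt N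
        ≤ Lh * vnorm2 (θ - θ1))
    -- Assumption 5 (bounded weights), with W ⊇ W_K and C_w ≥ 1
    (K : ℕ)
    (Cw : ℝ)
    (hCw1 : 1 ≤ Cw)
    -- symmetric case hypothesis
    (hpos : ∀ θ ∈ Ωθ, (Hfun hm θ 1).PosDef)
    -- C_∞ := sup over θ ∈ Ωθ and n of max{‖gₙ(θ)‖₁, ‖hₙ(θ)‖₁}
    (Cinf : ℝ)
    (hCinf : Cinf = ⨆ θ : Ωθ, ⨆ n : Fin N,
      max (vnorm1 (g n θ.1)) (mnorm1 (hm n θ.1)))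
    -- δ_K := K·C_∞/N ≤ Δ_δ := min{Δθ/C_op, 1/(2 C_IJ C_op)}
    (hδΔ : K * Cinf / N ≤ min (Δθ / Cop) (1 / (2 * (1 + D * Cw * Lh * Cop) * Cop))) :
    ∀ w ∈ leaveKOut N K, ∀ θw ∈ Ωθ, Gfun g θw w = 0 →
      vnorm2 (thetaIJ g hm θ1 w - θw)
          ≤ 2 * Cop ^ 2 * (1 + D * Cw * Lh * Cop) * (K * Cinf / N) ^ 2 ∧
      2 * Cop ^ 2 * (1 + D * Cw * Lh * Cop) * (K * Cinf / N) ^ 2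
          ≤ 2 * Cop ^ 2 * (1 + D * Cw * Lh * Cop) * K ^ 2 * D ^ 2 * (max Cg Ch) ^ 2 / N := by
  rintro w ⟨S, rfl, rfl⟩ θw hθw hGw
  simp only [opNorm_eq_norm] at hA2
  obtain ⟨hle, hCinf_le⟩ := hCinf ▸ max_vnorm1_mnorm1_le_iSup_and_iSup_le g hm hN ⟨θ1, hθ1⟩ hA3g hA3h
  have hCinf0 : 0 ≤ Cinf := (Finset.sum_nonneg fun _ _ => abs_nonneg _).trans
    ((le_max_left _ _).trans (hle θ1 hθ1 ⟨0, hN⟩))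
  set δ := S.card * Cinf / N
  have hGH (θ) (hθ : θ ∈ Ωθ) := Gfun_Hfun_one_sub_leaveOut_le g hm θ S (hle θ hθ)
  have : Nonempty (Fin D) := ⟨⟨0, hD⟩⟩
  have hCop : 0 < Cop := pos_of_norm_inv_le (hA2 θ1 hθ1).1 (hA2 θ1 hθ1).2
  have hρ : vnorm2 (θw - θ1) ≤ Cop * δ := (vnorm2_root_sub_root_le g hm hΩconv hderiv hpos
    (fun θ hθ => (hA2 θ hθ).2) hθ1 hθw hroot hGw).trans (by gcongr; exact (hGH θw hθw).1)
  have hLip (θ) (hθ : θ ∈ Ωθ) (hθr : vnorm2 (θ - θ1) ≤ Cop * δ) :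
      ‖Hfun hm θ 1 - Hfun hm θ1 1‖ ≤ Lh * vnorm2 (θ - θ1) :=
    (norm_Hfun_one_sub_le hm θ θ1).trans
      (hA4 θ hθ (hθr.trans ((le_div_iff₀' hCop).1 (hδΔ.trans (min_le_left _ _)))))
  have hCIJ : 0 ≤ 1 + D * Cw * Lh * Cop := by
    nlinarith [one_div_nonneg.1 ((by positivity : 0 ≤ δ).trans (hδΔ.trans (min_le_right _ _)))]
  refine ⟨?_, ?_⟩
  · rcases le_or_gt 0 Lh with hLh | hLh
    · have hDCw : 1 ≤ (D : ℝ) * Cw := one_le_mul_of_one_le_of_one_le (by exact_mod_cast hD) hCw1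
      calc _ ≤ Cop * ((δ + Lh * (Cop * δ)) * (Cop * δ)) :=
            vnorm2_thetaIJ_sub_le g hm hΩconv hderiv hθ1 hθw hroot hGw (hA2 θ1 hθ1).1
              (hA2 θ1 hθ1).2 (fun θ hθ => (hGH θ hθ).2) hLip hLh hρ
        _ ≤ _ := by nlinarith [mul_nonneg (mul_nonneg hLh hCop.le) (sq_nonneg (Cop * δ))]
    · -- a negative `Lh` in Assumption 4 pins `θw` to `θ1`
      obtain rfl : θw = θ1 := sub_eq_zero.1 <| vnorm2_eq_zero.1 <| le_antisymm
        (nonpos_of_mul_nonneg_right ((norm_nonneg _).trans (hLip θw hθw hρ)) hLh)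
        (vnorm2_nonneg _)
      rw [thetaIJ_eq_self g hm hroot hGw, sub_self, vnorm2_zero]
      exact mul_nonneg (mul_nonneg (by positivity) hCIJ) (sq_nonneg _)
  · calc _ ≤ 2 * Cop ^ 2 * (1 + D * Cw * Lh * Cop) * (S.card ^ 2 * (D * max Cg Ch) ^ 2 / N) :=
          mul_le_mul_of_nonneg_left (sq_mul_div_le_of_le_sqrt_mul (Nat.cast_pos.2 hN) hCinf0
            hCinf_le) (mul_nonneg (by positivity) hCIJ)
      _ = _ := by ring

theorem swiss_army_ij_leave_K_out
    (N D : ℕ) (hN : 0 < N) (hD : 0 < D)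
    -- setup: compact convex parameter domain
    (Ωθ : Set (Fin D → ℝ)) (hΩc : IsCompact Ωθ) (hΩconv : Convex ℝ Ωθ)
    -- setup: the gₙ are continuously differentiable on Ωθ with Jacobians hₙ
    (g : Fin N → (Fin D → ℝ) → Fin D → ℝ)
    (hm : Fin N → (Fin D → ℝ) → Matrix (Fin D) (Fin D) ℝ)
    (hderiv : ∀ n, ∀ θ ∈ Ωθ,
      HasFDerivWithinAt (g n) ((hm n θ).mulVecLin.toContinuousLinearMap) Ωθ θ)
    (hcont : ∀ n, ∀ i j : Fin D, ContinuousOn (fun θ => hm n θ i j) Ωθ)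
    -- setup: θ̂₁ solves the estimating equation at weights 1_w
    (θ1 : Fin D → ℝ) (hθ1 : θ1 ∈ Ωθ) (hroot : Gfun g θ1 1 = 0)
    -- Assumption 2 (non-degeneracy)
    (Cop : ℝ)
    (hA2 : ∀ θ ∈ Ωθ, IsUnit (Hfun hm θ 1) ∧ opNorm (Hfun hm θ 1)⁻¹ ≤ Cop)
    -- Assumption 3 (bounded averages)
    (Cg Ch : ℝ)
    (hA3g : ∀ θ ∈ Ωθ,
      vnorm2 (fun p : Fin N × Fin D => g p.1 θ p.2) / Real.sqrt N ≤ Cg)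
    (hA3h : ∀ θ ∈ Ωθ,
      vnorm2 (fun p : Fin N × Fin D × Fin D => hm p.1 θ p.2.1 p.2.2) / Real.sqrt N ≤ Ch)
    -- Assumption 4 (local smoothness)
    (Δθ Lh : ℝ) (hΔθ : 0 < Δθ)
    (hA4 : ∀ θ ∈ Ωθ, vnorm2 (θ - θ1) ≤ Δθ →
      vnorm2 (fun p : Fin N × Fin D × Fin D =>
          hm p.1 θ p.2.1 p.2.2 - hm p.1 θ1 p.2.1 p.2.2) / Real.sqrt N
        ≤ Lh * vnorm2 (θ - θ1))
    -- Assumption 5 (bounded weights), with W ⊇ W_K and C_w ≥ 1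
    (K : ℕ) (hK1 : 1 ≤ K) (hKN : K ≤ N)
    (W : Set (Fin N → ℝ)) (Cw : ℝ)
    (hA5 : ∀ w ∈ W, vnorm2 w / Real.sqrt N ≤ Cw)
    (hWK : leaveKOut N K ⊆ W) (hCw1 : 1 ≤ Cw)
    -- symmetric case hypothesis
    (hsymm : ∀ n, ∀ θ ∈ Ωθ, (hm n θ).IsSymm)
    (hpos : ∀ θ ∈ Ωθ, (Hfun hm θ 1).PosDef)
    -- C_∞ := sup over θ ∈ Ωθ and n of max{‖gₙ(θ)‖₁, ‖hₙ(θ)‖₁}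
    (Cinf : ℝ)
    (hCinf : Cinf = ⨆ θ : Ωθ, ⨆ n : Fin N,
      max (vnorm1 (g n θ.1)) (mnorm1 (hm n θ.1)))
    -- δ_K := K·C_∞/N ≤ Δ_δ := min{Δθ/C_op, 1/(2 C_IJ C_op)}
    (hδΔ : K * Cinf / N ≤ min (Δθ / Cop) (1 / (2 * (1 + D * Cw * Lh * Cop) * Cop))) :
    ∀ w ∈ leaveKOut N K, ∀ θw ∈ Ωθ, Gfun g θw w = 0 →
      vnorm2 (thetaIJ g hm θ1 w - θw)
          ≤ 2 * Cop ^ 2 * (1 + D * Cw * Lh * Cop) * (K * Cinf / N) ^ 2 ∧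
      2 * Cop ^ 2 * (1 + D * Cw * Lh * Cop) * (K * Cinf / N) ^ 2
          ≤ 2 * Cop ^ 2 * (1 + D * Cw * Lh * Cop) * K ^ 2 * D ^ 2 * (max Cg Ch) ^ 2 / N :=
  swiss_army_ij_leave_K_out_general N D hN hD Ωθ hΩconv g hm hderiv θ1 hθ1 hroot Cop hA2 Cg Ch hA3g
    hA3h Δθ Lh hA4 K Cw hCw1 hpos Cinf hCinf hδΔ
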